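/- arXiv:2109.14383 — 7 statements merged into one kernel-verified Lean document; each statement's English description precedes it below -/
import Mathlib

section
/- Let α ∈ (0, 1] and let τ, η be real numbers with η > 0. Then every complex root z of the polynomial z² − τ·z + η satisfies |arg(z)| > απ/2 if and only if τ/√η < 2·cos(απ/2). (Here arg denotes the principal argument, with values in (−π, π].) -/
set_option maxHeartbeats 1000000


/-- For `α ∈ (0, 1]` and `η > 0`, every complex root `z` of `z² − τ·z + η` lies in the
sector `|arg z| > απ/2` if and only if `τ/√η < 2·cos(απ/2)`. -/
theorem quadratic_roots_sector_iff (α τ η : ℝ) (hα : α ∈ Set.Ioc (0 : ℝ) 1) (hη : 0 < η) :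
    (∀ z : ℂ, z ^ 2 - (τ : ℂ) * z + (η : ℂ) = 0 → |z.arg| > α * Real.pi / 2) ↔
      τ / Real.sqrt η < 2 * Real.cos (α * Real.pi / 2) := by
  obtain ⟨hα0, hα1⟩ := hα
  have hπ := Real.pi_pos
  set θ := α * Real.pi / 2 with hθdef
  have hθ0 : 0 < θ := by
    have := mul_pos hα0 hπ; rw [hθdef]; linarith
  have hθπ2 : θ ≤ Real.pi / 2 := by
    have : α * Real.pi ≤ 1 * Real.pi := mul_le_mul_of_nonneg_right hα1 hπ.le
    rw [hθdef]; linarith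
  set s := Real.sqrt η with hsdef
  have hs : 0 < s := Real.sqrt_pos.mpr hη
  have hs2 : s ^ 2 = η := Real.sq_sqrt hη.le
  have hcos0 : 0 ≤ Real.cos θ := Real.cos_nonneg_of_mem_Icc ⟨by linarith, hθπ2⟩
  have hcos1 : Real.cos θ < 1 := by
    have h := Real.cos_lt_cos_of_nonneg_of_le_pi le_rfl (by linarith) hθ0
    simpa using h
  constructor
  · intro h
    by_contra hcon
    push_neg at hcon
    have hτ : 2 * Real.cos θ * s ≤ τ := (le_div_iff₀ hs).mp hcon
    have hτ0 : 0 ≤ τ := le_trans (by positivity) hτ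
    rcases le_or_gt (2 * s) τ with hcase | hcase
    · -- real positive root
      set d := Real.sqrt (τ ^ 2 - 4 * η) with hddef
      have hd2 : d ^ 2 = τ ^ 2 - 4 * η := Real.sq_sqrt (by nlinarith)
      have hd0 : 0 ≤ d := Real.sqrt_nonneg _
      set x := (τ + d) / 2 with hxdef
      have hx : x ^ 2 - τ * x + η = 0 := by rw [hxdef]; nlinarith
      have hroot : ((x : ℂ)) ^ 2 - (τ : ℂ) * x + (η : ℂ) = 0 := by
        have h0 : ((x ^ 2 - τ * x + η : ℝ) : ℂ) = 0 := by rw [hx]; simp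
        push_cast at h0; linear_combination h0
      have hx0 : 0 ≤ x := by rw [hxdef]; nlinarith
      have harg : Complex.arg (x : ℂ) = 0 := Complex.arg_ofReal_of_nonneg hx0
      have := h (x : ℂ) hroot
      rw [harg] at this
      simp at this
      linarith
    · -- complex root
      have hpos : 0 < η - τ ^ 2 / 4 := by nlinarith
      set y := Real.sqrt (η - τ ^ 2 / 4) with hydef
      have hy2 : y ^ 2 = η - τ ^ 2 / 4 := Real.sq_sqrt hpos.le
      have hy0 : 0 < y := Real.sqrt_pos.mpr hpos
      set z : ℂ := Complex.mk (τ / 2) y with hzdef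
      have hzre : z.re = τ / 2 := rfl
      have hzim : z.im = y := rfl
      have hroot : z ^ 2 - (τ : ℂ) * z + (η : ℂ) = 0 := by
        apply Complex.ext
        · simp [pow_two, Complex.mul_re, hzre, hzim]; nlinarith
        · simp [pow_two, Complex.mul_im, hzre, hzim]; ring
      have habs : ‖z‖ = s := by
        have h2 : ‖z‖ ^ 2 = s ^ 2 := by
          rw [Complex.sq_norm, Complex.normSq_apply, hzre, hzim, hs2]; nlinarith
        have h3 : ‖z‖ = Real.sqrt (s ^ 2) := by
          rw [← h2, Real.sqrt_sq (norm_nonneg z)]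
        rw [h3, Real.sqrt_sq hs.le]
      have hz0 : z ≠ 0 := by
        intro h0; rw [h0] at habs; simp at habs; exact hs.ne' habs.symm
      have hcarg : Real.cos (Complex.arg z) = τ / 2 / s := by
        rw [Complex.cos_arg hz0, habs, hzre]
      have hargnn : 0 ≤ Complex.arg z := Complex.arg_nonneg_iff.mpr (by rw [hzim]; exact hy0.le)
      have hargpi : Complex.arg z ≤ Real.pi := Complex.arg_le_pi z
      have hgt := h z hroot
      rw [abs_of_nonneg hargnn] at hgt
      have hkey := Real.cos_lt_cos_of_nonneg_of_le_pi hθ0.le hargpi hgt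
      rw [hcarg, div_div, div_lt_iff₀ (by positivity : (0:ℝ) < 2 * s)] at hkey
      nlinarith [hτ, hkey, hs, hcos0]
  · intro hlt z hz
    have hτs : τ < 2 * Real.cos θ * s := (div_lt_iff₀ hs).mp hlt
    have hre : z.re ^ 2 - z.im ^ 2 - τ * z.re + η = 0 := by
      have h0 := congrArg Complex.re hz
      simp [pow_two, Complex.mul_re] at h0
      nlinarith [h0]
    have him : z.im * (2 * z.re - τ) = 0 := by
      have h0 := congrArg Complex.im hz
      simp [pow_two, Complex.mul_im] at h0
      nlinarith [h0]
    rcases eq_or_ne z.im 0 with him0 | him0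
    · rw [him0] at hre
      rcases lt_trichotomy z.re 0 with hx | hx | hx
      · have harg : Complex.arg z = Real.pi := Complex.arg_eq_pi_iff.mpr ⟨hx, him0⟩
        rw [harg, abs_of_pos hπ]; linarith
      · exfalso; rw [hx] at hre; nlinarith
      · exfalso
        -- z.re > 0 real root: forces τ ≥ 2 s, contradiction with τ < 2 cos θ s < 2 s
        nlinarith [sq_nonneg (z.re - s), mul_pos hs hx]
    · have hre2 : z.re = τ / 2 := by
        rcases mul_eq_zero.mp him with h0 | h0
        · exact absurd h0 him0
        · linarith
      have hy2 : z.im ^ 2 = η - τ ^ 2 / 4 := by rw [hre2] at hre; nlinarith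
      have habs : ‖z‖ = s := by
        have h2 : ‖z‖ ^ 2 = s ^ 2 := by
          rw [Complex.sq_norm, Complex.normSq_apply, hs2]; nlinarith
        have h3 : ‖z‖ = Real.sqrt (s ^ 2) := by
          rw [← h2, Real.sqrt_sq (norm_nonneg z)]
        rw [h3, Real.sqrt_sq hs.le]
      have hz0 : z ≠ 0 := by
        intro h0; rw [h0] at habs; simp at habs; exact hs.ne' habs.symm
      have hcarg : Real.cos (Complex.arg z) = τ / 2 / s := by
        rw [Complex.cos_arg hz0, habs, hre2]
      by_contra hc
      push_neg at hc
      have habspi : |Complex.arg z| ≤ Real.pi := Complex.abs_arg_le_pi z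
      have hle := Real.cos_le_cos_of_nonneg_of_le_pi (abs_nonneg _) (by linarith) hc
      rw [Real.cos_abs, hcarg] at hle
      have : τ / 2 / s < Real.cos θ := by
        rw [div_div, div_lt_iff₀ (by positivity)]; nlinarith
      linarith
end

section
/- Let b₁, b₂, b₃, b₄, k be real parameters, δ ∈ ℝ, α ∈ (0, 1], and set τ = b₁ + b₄ + 2(kδ − 1) and η = (1 − b₁)(1 − b₄) − b₂b₃ + (b₁ + b₂ + b₃ + b₄ − 2)kδ. If η > 0, then every nonzero complex eigenvalue z of the matrix J(δ) (i.e., every nonzero complex root of its characteristic polynomial) satisfies |arg(z)| > απ/2 if and only if τ/√η < 2·cos(απ/2). -/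
set_option maxHeartbeats 1000000
open Polynomial Real

lemma quad_sector (τ η α : ℝ) (hα0 : 0 < α) (hα1 : α ≤ 1) (hη : 0 < η) :
    (∀ z : ℂ, z ^ 2 - (τ : ℂ) * z + (η : ℂ) = 0 → |z.arg| > α * π / 2) ↔
      τ / Real.sqrt η < 2 * Real.cos (α * π / 2) := by
  have hπ := Real.pi_pos
  have hs : 0 < Real.sqrt η := Real.sqrt_pos.2 hη
  have hs2 : Real.sqrt η ^ 2 = η := Real.sq_sqrt hη.le
  have hθ0 : 0 < α * π / 2 := by positivity
  have hθπ2 : α * π / 2 ≤ π / 2 := by nlinarith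
  have hc0 : 0 ≤ Real.cos (α * π / 2) := Real.cos_nonneg_of_mem_Icc ⟨by linarith, hθπ2⟩
  have hc1 : Real.cos (α * π / 2) < 1 := by
    have := Real.strictAntiOn_cos (Set.mem_Icc.2 ⟨le_rfl, hπ.le⟩)
      (Set.mem_Icc.2 ⟨hθ0.le, by linarith⟩) hθ0
    simpa using this
  constructor
  · intro h
    by_contra hle
    push_neg at hle
    have hτ : 2 * Real.cos (α * π / 2) * Real.sqrt η ≤ τ := (le_div_iff₀ hs).1 hle
    have hτ0 : 0 ≤ τ := le_trans (by positivity) hτ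
    rcases le_or_gt (4 * η) (τ ^ 2) with hd | hd
    · have hτpos : 0 < τ := lt_of_le_of_ne hτ0 (by rintro rfl; nlinarith)
      have hd' : 0 ≤ τ ^ 2 - 4 * η := by linarith
      have hsq : (Real.sqrt (τ ^ 2 - 4 * η)) ^ 2 = τ ^ 2 - 4 * η := Real.sq_sqrt hd'
      set r := (τ + Real.sqrt (τ ^ 2 - 4 * η)) / 2 with hr
      have hr0 : 0 < r := by positivity
      have hroot : r ^ 2 - τ * r + η = 0 := by rw [hr]; nlinarith [hsq]
      have hzr : ((r : ℂ)) ^ 2 - (τ : ℂ) * r + (η : ℂ) = 0 := by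
        have : ((r ^ 2 - τ * r + η : ℝ) : ℂ) = 0 := by rw [hroot]; simp
        push_cast at this; linear_combination this
      have := h r hzr
      rw [Complex.arg_ofReal_of_nonneg hr0.le] at this
      simp at this
      linarith
    · set y := Real.sqrt (η - τ ^ 2 / 4) with hy
      have hy2 : y ^ 2 = η - τ ^ 2 / 4 := Real.sq_sqrt (by nlinarith)
      have hypos : 0 < y := Real.sqrt_pos.2 (by nlinarith)
      set z : ℂ := ⟨τ / 2, y⟩ with hzdef
      have hz : z ^ 2 - (τ : ℂ) * z + (η : ℂ) = 0 := by
        rw [Complex.ext_iff]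
        constructor <;>
          simp [hzdef, pow_two, Complex.mul_re, Complex.mul_im]
        · nlinarith [hy2]
        · ring
      have hzne : z ≠ 0 := by
        intro h0
        have : z.im = 0 := by rw [h0]; rfl
        rw [hzdef] at this
        exact absurd this (ne_of_gt hypos)
      have habs : ‖z‖ = Real.sqrt η := by
        rw [Complex.norm_def, Complex.normSq_apply, hzdef]
        congr 1
        nlinarith [hy2]
      have hcos : Real.cos z.arg = (τ / 2) / Real.sqrt η := by
        rw [Complex.cos_arg hzne, habs]
      have harg := h z hz
      have h1 : Real.cos |z.arg| < Real.cos (α * π / 2) :=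
        Real.strictAntiOn_cos (Set.mem_Icc.2 ⟨hθ0.le, by linarith⟩)
          (Set.mem_Icc.2 ⟨abs_nonneg _, Complex.abs_arg_le_pi z⟩) harg
      rw [Real.cos_abs, hcos] at h1
      rw [div_lt_iff₀ hs] at h1
      linarith
  · intro h z hz
    have him := congrArg Complex.im hz
    have hre := congrArg Complex.re hz
    simp [pow_two, Complex.mul_re, Complex.mul_im] at him hre
    rcases eq_or_ne z.im 0 with hy | hy
    · have hx : z.re * z.re - τ * z.re + η = 0 := by
        rw [hy] at hre; linarith [hre]
      have hxneg : z.re < 0 := by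
        rcases lt_trichotomy z.re 0 with h' | h' | h'
        · exact h'
        · exfalso; rw [h'] at hx; nlinarith
        · exfalso
          have h2 : 2 * Real.sqrt η ≤ τ := by nlinarith [sq_nonneg (z.re - Real.sqrt η), hs2, mul_pos h' hs]
          have h3 : τ < 2 * Real.sqrt η := by
            rw [div_lt_iff₀ hs] at h; nlinarith
          linarith
      have hzx : z = ((z.re : ℝ) : ℂ) := Complex.ext rfl (by simp [hy])
      rw [hzx, Complex.arg_ofReal_of_neg hxneg, abs_of_pos hπ]
      nlinarith
    · have hx : z.re = τ / 2 := by
        have h2 : z.im * (2 * z.re - τ) = 0 := by linear_combination him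
        rcases mul_eq_zero.1 h2 with h' | h'
        · exact absurd h' hy
        · linarith
      have hy2 : z.im ^ 2 = η - τ ^ 2 / 4 := by rw [hx] at hre; nlinarith [hre]
      have hzne : z ≠ 0 := by
        intro h0; exact hy (by rw [h0]; rfl)
      have habs : ‖z‖ = Real.sqrt η := by
        rw [Complex.norm_def, Complex.normSq_apply]
        congr 1
        rw [hx]; nlinarith [hy2]
      have hcos : Real.cos z.arg = (τ / 2) / Real.sqrt η := by
        rw [Complex.cos_arg hzne, habs, hx]
      have h1 : Real.cos |z.arg| < Real.cos (α * π / 2) := by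
        rw [Real.cos_abs, hcos, div_lt_iff₀ hs]
        rw [div_lt_iff₀ hs] at h
        linarith
      by_contra hle
      push_neg at hle
      have := Real.cos_le_cos_of_nonneg_of_le_pi (abs_nonneg _) (by linarith) hle
      linarith

/-- The Jacobian matrix of the FMHNN vector field at the equilibrium point `(0, 0, δ)`. -/
noncomputable def fmhnnJ (b₁ b₂ b₃ b₄ k δ : ℝ) : Matrix (Fin 3) (Fin 3) ℝ :=
  !![-1 + b₁ + k * δ, b₂ - k * δ, 0;
     b₃ - k * δ, -1 + b₄ + k * δ, 0;
     1, -1, 0]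

lemma fmhnnJ_charpoly (b₁ b₂ b₃ b₄ k δ : ℝ) :
    (fmhnnJ b₁ b₂ b₃ b₄ k δ).charpoly =
      X ^ 3 - C (b₁ + b₄ + 2 * (k * δ - 1)) * X ^ 2 +
        C ((1 - b₁) * (1 - b₄) - b₂ * b₃ + (b₁ + b₂ + b₃ + b₄ - 2) * (k * δ)) * X := by
  rw [Matrix.charpoly, Matrix.det_fin_three]
  simp [Matrix.charmatrix_apply, fmhnnJ, Matrix.diagonal, Matrix.vecHead, Matrix.vecTail,
    map_ofNat]
  ring

/-- Sector condition for the nonzero complex eigenvalues of `J(δ)` when `η > 0`: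
every nonzero complex root of the characteristic polynomial of `J(δ)` satisfies
`|arg z| > απ/2` if and only if `τ/√η < 2·cos(απ/2)`. -/
theorem fmhnnJ_eigenvalues_sector_iff (b₁ b₂ b₃ b₄ k δ α : ℝ)
    (hα : α ∈ Set.Ioc (0 : ℝ) 1)
    (hη : 0 < (1 - b₁) * (1 - b₄) - b₂ * b₃ + (b₁ + b₂ + b₃ + b₄ - 2) * (k * δ)) :
    (∀ z : ℂ, z ≠ 0 → Polynomial.aeval z (fmhnnJ b₁ b₂ b₃ b₄ k δ).charpoly = 0 →
        |z.arg| > α * Real.pi / 2) ↔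
      (b₁ + b₄ + 2 * (k * δ - 1)) /
          Real.sqrt ((1 - b₁) * (1 - b₄) - b₂ * b₃ + (b₁ + b₂ + b₃ + b₄ - 2) * (k * δ)) <
        2 * Real.cos (α * Real.pi / 2) := by
  obtain ⟨hα0, hα1⟩ := hα
  have key := quad_sector (b₁ + b₄ + 2 * (k * δ - 1))
    ((1 - b₁) * (1 - b₄) - b₂ * b₃ + (b₁ + b₂ + b₃ + b₄ - 2) * (k * δ)) α hα0 hα1 hη
  have heval : ∀ z : ℂ, (Polynomial.aeval z) (fmhnnJ b₁ b₂ b₃ b₄ k δ).charpoly =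
      z * (z ^ 2 - ((b₁ + b₄ + 2 * (k * δ - 1) : ℝ) : ℂ) * z +
        (((1 - b₁) * (1 - b₄) - b₂ * b₃ + (b₁ + b₂ + b₃ + b₄ - 2) * (k * δ) : ℝ) : ℂ)) := by
    intro z
    rw [fmhnnJ_charpoly]
    simp
    push_cast
    ring
  rw [← key]
  constructor
  · intro h z hz
    have hzne : z ≠ 0 := by
      intro h0
      apply absurd _ hη.ne'
      have h2 : (((1 - b₁) * (1 - b₄) - b₂ * b₃ + (b₁ + b₂ + b₃ + b₄ - 2) * (k * δ) : ℝ) : ℂ)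
          = 0 := by
        rw [h0] at hz; linear_combination hz
      exact_mod_cast h2
    exact h z hzne (by rw [heval, hz, mul_zero])
  · intro h z hzne hz
    rw [heval] at hz
    rcases mul_eq_zero.1 hz with h0 | h0
    · exact absurd h0 hzne
    · exact h z h0
end

section
/- Let b₁ = −1/10, b₂ = 14/5, b₃ = −3, b₄ = 4, let k ≠ 0 be real and δ = −3/k. Then the characteristic polynomial of J(δ) equals X²·(X + 41/10); in particular the eigenvalues of J(δ) are 0 (with multiplicity two) and −41/10, so every nonzero complex eigenvalue z of J(δ) satisfies |arg(z)| = π > απ/2 for every α ∈ (0, 1). -/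
/-- For `b₁ = −1/10, b₂ = 14/5, b₃ = −3, b₄ = 4`, `k ≠ 0` and `δ = −3/k`, the
characteristic polynomial of `J(δ)` is `X²·(X + 41/10)`; in particular every nonzero
complex eigenvalue `z` of `J(δ)` satisfies `|arg z| = π > απ/2` for every `α ∈ (0, 1)`. -/
theorem fmhnnJ_case_eta_zero (k : ℝ) (hk : k ≠ 0) :
    (fmhnnJ (-1/10) (14/5) (-3) 4 k (-3/k)).charpoly =
        Polynomial.X ^ 2 * (Polynomial.X + Polynomial.C (41/10 : ℝ)) ∧
      ∀ z : ℂ, z ≠ 0 →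
        Polynomial.aeval z (fmhnnJ (-1/10) (14/5) (-3) 4 k (-3/k)).charpoly = 0 →
          |z.arg| = Real.pi ∧
            ∀ α ∈ Set.Ioo (0 : ℝ) 1, |z.arg| > α * Real.pi / 2 := by
  have hkd : k * (-3 / k) = -3 := by field_simp
  have hcp : (fmhnnJ (-1/10) (14/5) (-3) 4 k (-3/k)).charpoly =
      Polynomial.X ^ 2 * (Polynomial.X + Polynomial.C (41/10 : ℝ)) := by
    rw [Matrix.charpoly, Matrix.det_fin_three]
    simp [fmhnnJ, Matrix.charmatrix_apply, hkd, Matrix.one_apply, Matrix.vecHead, Matrix.vecTail]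
    have h1 : (-1 : Polynomial ℝ) = Polynomial.C (-1) := by simp
    rw [h1]
    simp only [← Polynomial.C_neg, ← Polynomial.C_add]
    norm_num
    ring
  refine ⟨hcp, fun z hz haev => ?_⟩
  rw [hcp] at haev
  simp only [map_mul, map_add, map_pow, Polynomial.aeval_X, Polynomial.aeval_C,
    mul_eq_zero, pow_eq_zero_iff, two_ne_zero] at haev
  have hzval : z = -(41/10 : ℝ) := by
    rcases haev with h | h
    · exact absurd (pow_eq_zero_iff two_ne_zero |>.mp h) hz
    · have : z = -((algebraMap ℝ ℂ) (41/10)) := by linear_combination h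
      simpa using this
  have harg : z.arg = Real.pi := by
    rw [hzval]
    rw [show (-(41/10 : ℝ) : ℂ) = ((-(41/10) : ℝ) : ℂ) by push_cast; ring]
    rw [Complex.arg_ofReal_of_neg (by norm_num)]
  have hpi := Real.pi_pos
  refine ⟨by rw [harg, abs_of_pos hpi], fun α hα => ?_⟩
  rw [harg, abs_of_pos hpi]
  nlinarith [hα.1, hα.2]
end

section
/- Let b₁, b₂, b₃, b₄, k be real parameters with b₁ + b₂ ≠ b₃ + b₄. Then for (x₁, x₂, φ) ∈ ℝ³, F(x₁, x₂, φ) = (0, 0, 0) if and only if x₁ = 0 and x₂ = 0; that is, the set of equilibrium points of the FMHNN system is exactly {(0, 0, δ) : δ ∈ ℝ}. -/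
/-- The FMHNN vector field on `ℝ³ = ℝ × ℝ × ℝ`. -/
noncomputable def fmhnnF (b₁ b₂ b₃ b₄ k : ℝ) : ℝ × ℝ × ℝ → ℝ × ℝ × ℝ :=
  fun x =>
    (-x.1 + b₁ * Real.tanh x.1 + b₂ * Real.tanh x.2.1 + k * x.2.2 * (x.1 - x.2.1),
     -x.2.1 + b₃ * Real.tanh x.1 + b₄ * Real.tanh x.2.1 - k * x.2.2 * (x.1 - x.2.1),
     x.1 - x.2.1)

/-- If `b₁ + b₂ ≠ b₃ + b₄`, then `(x₁, x₂, φ)` is an equilibrium of the FMHNN system iff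
`x₁ = 0` and `x₂ = 0`; i.e. the equilibria are exactly the points `(0, 0, δ)`, `δ ∈ ℝ`. -/
theorem fmhnn_equilibria (b₁ b₂ b₃ b₄ k : ℝ) (h : b₁ + b₂ ≠ b₃ + b₄) (x : ℝ × ℝ × ℝ) :
    fmhnnF b₁ b₂ b₃ b₄ k x = (0, 0, 0) ↔ x.1 = 0 ∧ x.2.1 = 0 := by
  constructor
  · intro hF
    have h1 := congrArg Prod.fst hF
    have h2 := congrArg (fun p => p.2.1) hF
    have h3 := congrArg (fun p => p.2.2) hF
    simp only [fmhnnF] at h1 h2 h3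
    have hx : x.1 = x.2.1 := by linarith
    have htanh : Real.tanh x.1 = 0 := by
      have : (b₁ + b₂ - b₃ - b₄) * Real.tanh x.1 = 0 := by
        rw [hx] at h1 h2 ⊢
        ring_nf
        ring_nf at h1 h2
        linarith
      have hb : b₁ + b₂ - b₃ - b₄ ≠ 0 := fun hc => h (by linarith)
      exact (mul_eq_zero.mp this).resolve_left hb
    have hx1 : x.1 = 0 := by
      rw [hx] at h1 htanh
      rw [htanh] at h1
      linarith
    exact ⟨hx1, by rw [← hx, hx1]⟩
  · rintro ⟨h1, h2⟩
    simp [fmhnnF, h1, h2, Real.tanh_eq_sinh_div_cosh]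
end

section
/- Let m ≥ 1 and n ≥ 1 be integers, and let A and C be m×m complex matrices. Let B be the (n·m)×(n·m) block matrix whose n diagonal blocks all equal A and whose off-diagonal blocks all equal C (the block circulant matrix bcirc(A, C, …, C)). Then the characteristic polynomial of B equals charpoly(A + (n−1)·C) · (charpoly(A − C))^(n−1); in particular, the eigenvalues of B are exactly the eigenvalues of A + (n−1)·C together with the eigenvalues of A − C, the latter counted with multiplicity n − 1. -/
open Matrix Polynomial
open scoped Kronecker

namespace BcircAux

variable {R : Type*} [CommRing R]

/-- `E i j = 1` iff `j = 0` and `i ≠ 0`. -/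
def Emat (n : ℕ) : Matrix (Fin (n+1)) (Fin (n+1)) R :=
  Matrix.of fun i j => if j = 0 ∧ i ≠ 0 then 1 else 0

/-- All-ones matrix. -/
def Jmat (n : ℕ) : Matrix (Fin (n+1)) (Fin (n+1)) R :=
  Matrix.of fun _ _ => 1

/-- The triangular form of `J` after conjugation. -/
def Dmat (n : ℕ) : Matrix (Fin (n+1)) (Fin (n+1)) R :=
  Matrix.of fun i j => if i = 0 then (if j = 0 then ((n+1 : ℕ) : R) else 1) else 0

lemma Emat_mul_Emat (n : ℕ) : (Emat n : Matrix (Fin (n+1)) (Fin (n+1)) R) * Emat n = 0 := by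
  ext i j
  simp only [Matrix.mul_apply, Emat, Matrix.of_apply, Matrix.zero_apply]
  refine Finset.sum_eq_zero fun k _ => ?_
  by_cases hk : k = 0 <;> simp [hk]

lemma QP (n : ℕ) :
    ((1 - Emat n) * (1 + Emat n) : Matrix (Fin (n+1)) (Fin (n+1)) R) = 1 := by
  rw [mul_add, mul_one, sub_mul, one_mul, Emat_mul_Emat, sub_zero, sub_add_cancel]

lemma sum_ne_zero_ind (n : ℕ) :
    (∑ k : Fin (n+1), if k ≠ 0 then (1:R) else 0) = n := by
  have h : ∀ k : Fin (n+1), (if k ≠ 0 then (1:R) else 0)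
      = 1 - (if k = 0 then 1 else 0) := by
    intro k; by_cases hk : k = 0 <;> simp [hk]
  rw [Finset.sum_congr rfl fun k _ => h k, Finset.sum_sub_distrib]
  simp [Finset.card_univ]

lemma J_mul_E (n : ℕ) :
    (Jmat n * Emat n : Matrix (Fin (n+1)) (Fin (n+1)) R)
      = Matrix.of fun _ j => if j = 0 then (n : R) else 0 := by
  ext i j
  rw [Matrix.mul_apply]
  simp only [Jmat, Emat, Matrix.of_apply, one_mul]
  by_cases hj : j = 0
  · subst hj
    simp only [if_pos rfl, true_and]
    exact sum_ne_zero_ind n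
  · simp [hj]

lemma E_mul_J (n : ℕ) :
    (Emat n * Jmat n : Matrix (Fin (n+1)) (Fin (n+1)) R)
      = Matrix.of fun i _ => if i = 0 then 0 else 1 := by
  ext i j
  rw [Matrix.mul_apply]
  simp only [Jmat, Emat, Matrix.of_apply, mul_one]
  by_cases hi : i = 0
  · simp [hi]
  · simp only [hi, if_neg hi, ne_eq, not_false_iff, and_true]
    rw [Finset.sum_ite_eq' Finset.univ (0 : Fin (n+1)) (fun _ => (1:R))]
    simp

lemma E_mul_J_mul_E (n : ℕ) :
    (Emat n * Jmat n * Emat n : Matrix (Fin (n+1)) (Fin (n+1)) R)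
      = Matrix.of fun i j => if i = 0 then 0 else (if j = 0 then (n : R) else 0) := by
  rw [Matrix.mul_assoc, J_mul_E]
  ext i j
  rw [Matrix.mul_apply]
  simp only [Emat, Matrix.of_apply]
  by_cases hi : i = 0
  · simp [hi]
  · simp only [hi, if_neg hi, ne_eq, not_false_iff, and_true, ite_mul, one_mul, zero_mul]
    rw [Finset.sum_ite_eq' Finset.univ (0 : Fin (n+1))
      (fun _ => if j = 0 then (n : R) else 0)]
    simp

lemma QJP (n : ℕ) :
    ((1 - Emat n) * Jmat n * (1 + Emat n) : Matrix (Fin (n+1)) (Fin (n+1)) R) = Dmat n := by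
  have expand : ((1 - Emat n) * Jmat n * (1 + Emat n) : Matrix (Fin (n+1)) (Fin (n+1)) R)
      = Jmat n + Jmat n * Emat n - Emat n * Jmat n - Emat n * Jmat n * Emat n := by
    rw [sub_mul, one_mul, sub_mul, mul_add, mul_one, mul_add, mul_one]
    abel
  rw [expand, E_mul_J_mul_E, J_mul_E, E_mul_J]
  ext i j
  simp only [Matrix.sub_apply, Matrix.add_apply, Jmat, Matrix.of_apply, Dmat]
  by_cases hi : i = 0 <;> by_cases hj : j = 0 <;> simp [hi, hj] <;> push_cast <;> ring

variable {m : ℕ}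

/-- The generic block-circulant determinant identity. -/
lemma det_bcirc (n : ℕ) (S T : Matrix (Fin m) (Fin m) R) :
    (Matrix.of fun (q r : Fin (n+1) × Fin m) =>
        if q.1 = r.1 then S q.2 r.2 else T q.2 r.2).det
      = (S + n • T).det * (S - T).det ^ n := by
  classical
  set E : Matrix (Fin (n+1)) (Fin (n+1)) R := Emat n with hE
  set M : Matrix (Fin (n+1) × Fin m) (Fin (n+1) × Fin m) R :=
    Matrix.of fun q r => if q.1 = r.1 then S q.2 r.2 else T q.2 r.2 with hM
  have hMk : M = (1 : Matrix (Fin (n+1)) (Fin (n+1)) R) ⊗ₖ (S - T) + (Jmat n) ⊗ₖ T := by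
    ext ⟨q1, q2⟩ ⟨r1, r2⟩
    simp only [hM, Matrix.of_apply, Matrix.add_apply, Matrix.kroneckerMap_apply,
      Matrix.one_apply, Jmat, Matrix.sub_apply]
    by_cases h : q1 = r1 <;> simp [h]
  have key : ((1 - E) ⊗ₖ (1 : Matrix (Fin m) (Fin m) R)) * M
      * ((1 + E) ⊗ₖ (1 : Matrix (Fin m) (Fin m) R))
      = (1 : Matrix (Fin (n+1)) (Fin (n+1)) R) ⊗ₖ (S - T) + (Dmat n) ⊗ₖ T := by
    rw [hMk, mul_add, add_mul, ← Matrix.mul_kronecker_mul, ← Matrix.mul_kronecker_mul,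
      ← Matrix.mul_kronecker_mul, ← Matrix.mul_kronecker_mul, QJP]
    rw [show ((1 - E) * 1 * (1 + E) : Matrix (Fin (n+1)) (Fin (n+1)) R) = 1 by
      rw [Matrix.mul_one, QP]]
    simp
  set N : Matrix (Fin (n+1) × Fin m) (Fin (n+1) × Fin m) R :=
    (1 : Matrix (Fin (n+1)) (Fin (n+1)) R) ⊗ₖ (S - T) + (Dmat n) ⊗ₖ T with hN
  have hdet : M.det = N.det := by
    have h2 : ((1 - E) ⊗ₖ (1 : Matrix (Fin m) (Fin m) R)).det *
        ((1 + E) ⊗ₖ (1 : Matrix (Fin m) (Fin m) R)).det = 1 := by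
      rw [← Matrix.det_mul, ← Matrix.mul_kronecker_mul, QP, Matrix.mul_one,
        Matrix.one_kronecker_one, Matrix.det_one]
    have hthis := congrArg Matrix.det key
    rw [Matrix.det_mul, Matrix.det_mul] at hthis
    calc M.det = ((1 - E) ⊗ₖ (1 : Matrix (Fin m) (Fin m) R)).det * M.det *
        ((1 + E) ⊗ₖ (1 : Matrix (Fin m) (Fin m) R)).det := by
          rw [mul_comm _ M.det, mul_assoc, h2, mul_one]
      _ = N.det := hthis
  rw [hdet]
  have hbt : N.BlockTriangular Prod.fst := by
    intro q r hlt
    have hne : q.1 ≠ r.1 := ne_of_gt hlt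
    have hq0 : q.1 ≠ 0 := by
      intro h
      rw [h] at hlt
      exact absurd hlt (by simp [Fin.lt_iff_val_lt_val])
    simp only [hN, Matrix.add_apply, Matrix.kroneckerMap_apply, Matrix.one_apply,
      Dmat, Matrix.of_apply, if_neg hq0, if_neg (Ne.symm hne)]
    simp [hne]
  rw [hbt.det_fintype]
  have hblock : ∀ k : Fin (n+1), (N.toSquareBlock Prod.fst k).det
      = if k = 0 then (S + n • T).det else (S - T).det := by
    intro k
    let e : {p : Fin (n+1) × Fin m // p.1 = k} ≃ Fin m :=
      { toFun := fun p => p.1.2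
        invFun := fun j => ⟨(k, j), rfl⟩
        left_inv := fun p => by
          rcases p with ⟨⟨a, b⟩, h⟩
          subst h
          rfl
        right_inv := fun j => rfl }
    have heq : N.toSquareBlock Prod.fst k
        = ((if k = 0 then S + n • T else S - T) : Matrix (Fin m) (Fin m) R).submatrix e e := by
      apply Matrix.ext
      rintro ⟨p, hp⟩ ⟨r, hr⟩
      subst hp
      simp only [Matrix.toSquareBlock_def, hN, Matrix.add_apply, Matrix.kroneckerMap_apply,
        Matrix.submatrix_apply, Equiv.coe_fn_mk, e, Dmat, Matrix.of_apply, Matrix.one_apply, hr]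
      by_cases h0 : p.1 = 0
      · simp only [h0, if_true, one_mul]
        rw [Matrix.sub_apply, Matrix.add_apply, Matrix.smul_apply, nsmul_eq_mul]
        push_cast
        ring
      · simp only [if_neg h0, if_pos rfl, one_mul, zero_mul, add_zero]
        simp
    rw [heq, Matrix.det_submatrix_equiv_self e, apply_ite Matrix.det]
  simp only [hblock]
  rw [Fin.prod_univ_succ]
  simp [Fin.succ_ne_zero]

lemma charmatrix_add_map (A B : Matrix (Fin m) (Fin m) R) :
    Matrix.charmatrix (A + B) = Matrix.charmatrix A - B.map Polynomial.C := by
  apply Matrix.ext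
  intro i j
  by_cases h : i = j
  · subst h
    simp only [Matrix.charmatrix_apply_eq, Matrix.sub_apply, Matrix.add_apply,
      Matrix.map_apply, map_add]
    ring
  · simp only [Matrix.charmatrix_apply_ne _ _ _ h, Matrix.sub_apply, Matrix.add_apply,
      Matrix.map_apply, map_add]
    ring

end BcircAux

/-- The block circulant matrix `bcirc(A, C, …, C)` with `n` diagonal blocks `A` and all
off-diagonal blocks `C`. -/
def bcircAC {m n : ℕ} (A C : Matrix (Fin m) (Fin m) ℂ) :
    Matrix (Fin n × Fin m) (Fin n × Fin m) ℂ :=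
  fun q r => if q.1 = r.1 then A q.2 r.2 else C q.2 r.2

/-- The characteristic polynomial of `bcirc(A, C, …, C)` is
`charpoly(A + (n−1)·C) · (charpoly(A − C))^(n−1)`. -/
theorem bcircAC_charpoly (m n : ℕ) (hm : 1 ≤ m) (hn : 1 ≤ n)
    (A C : Matrix (Fin m) (Fin m) ℂ) :
    (bcircAC (n := n) A C).charpoly =
      (A + (n - 1) • C).charpoly * ((A - C).charpoly) ^ (n - 1) := by
  obtain ⟨n', rfl⟩ : ∃ n', n = n' + 1 := ⟨n - 1, by omega⟩
  simp only [Nat.add_sub_cancel]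
  rw [Matrix.charpoly]
  have hcm : Matrix.charmatrix (bcircAC (n := n'+1) A C)
      = Matrix.of fun (q r : Fin (n'+1) × Fin m) =>
          if q.1 = r.1 then (Matrix.charmatrix A) q.2 r.2
          else (-(C.map Polynomial.C)) q.2 r.2 := by
    apply Matrix.ext
    rintro ⟨q1, q2⟩ ⟨r1, r2⟩
    by_cases h1 : q1 = r1
    · subst h1
      by_cases h2 : q2 = r2
      · subst h2
        simp [bcircAC]
      · have h : ((q1, q2) : Fin (n'+1) × Fin m) ≠ (q1, r2) := by simp [h2]
        rw [Matrix.charmatrix_apply_ne _ _ _ h, Matrix.of_apply, if_pos rfl,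
          Matrix.charmatrix_apply_ne _ _ _ h2]
        simp [bcircAC]
    · have h : ((q1, q2) : Fin (n'+1) × Fin m) ≠ (r1, r2) := by simp [h1]
      rw [Matrix.charmatrix_apply_ne _ _ _ h]
      simp [bcircAC, h1]
  rw [hcm, BcircAux.det_bcirc]
  have e1 : Matrix.charmatrix A + n' • (-(C.map Polynomial.C))
      = Matrix.charmatrix (A + n' • C) := by
    rw [BcircAux.charmatrix_add_map]
    apply Matrix.ext
    intro i j
    simp only [Matrix.add_apply, Matrix.sub_apply, Matrix.smul_apply, Matrix.neg_apply,
      Matrix.map_apply, map_nsmul, smul_neg]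
    abel
  have e2 : Matrix.charmatrix A + C.map Polynomial.C
      = Matrix.charmatrix (A - C) := by
    rw [show A - C = A + (-C) from sub_eq_add_neg A C, BcircAux.charmatrix_add_map]
    apply Matrix.ext
    intro i j
    simp only [Matrix.add_apply, Matrix.sub_apply, Matrix.neg_apply, Matrix.map_apply, map_neg]
    ring
  rw [e1, sub_neg_eq_add, e2, Matrix.charpoly, Matrix.charpoly]
end

section
/- Let d be real, p a positive integer, n ≥ 1 an integer, and let A be the 3n×3n block matrix with diagonal blocks A₀ and off-diagonal blocks A₁. Then the characteristic polynomial of A equals Xⁿ · (X + 1)ⁿ · (X − μ₁) · (X − μ₂)^(n−1), where μ₁ = −1 − d/p + (n−1)·d/(2p) and μ₂ = −1 − d/p − d/(2p). -/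
/-- The diagonal block `A₀` of the linear part of the ring FMHNN system. -/
noncomputable def ringA0 (d : ℝ) (p : ℕ) : Matrix (Fin 3) (Fin 3) ℝ :=
  !![-1 - d / (p : ℝ), 0, 0;
     0, -1, 0;
     1, -1, 0]

/-- The off-diagonal block `A₁` of the linear part of the ring FMHNN system. -/
noncomputable def ringA1 (d : ℝ) (p : ℕ) : Matrix (Fin 3) (Fin 3) ℝ :=
  !![d / (2 * (p : ℝ)), 0, 0;
     0, 0, 0;
     0, 0, 0]

/-- The `3n × 3n` block circulant matrix `bcirc(A₀, A₁, …, A₁)`, the linear part of the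
ring FMHNN system with `n` sub-networks. -/
noncomputable def ringA (d : ℝ) (p n : ℕ) : Matrix (Fin n × Fin 3) (Fin n × Fin 3) ℝ :=
  fun q r => if q.1 = r.1 then ringA0 d p q.2 r.2 else ringA1 d p q.2 r.2

open Polynomial Matrix

/-- Splitting of the index type of the ring matrix. -/
def ringSplit (n : ℕ) : Fin n × Fin 3 ≃ Fin n ⊕ (Fin n ⊕ Fin n) where
  toFun q := if q.2 = 0 then Sum.inl q.1 else if q.2 = 1 then Sum.inr (Sum.inl q.1)
    else Sum.inr (Sum.inr q.1)
  invFun s := Sum.elim (fun i => (i, 0)) (Sum.elim (fun i => (i, 1)) fun i => (i, 2)) s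
  left_inv := by rintro ⟨i, j⟩; fin_cases j <;> simp
  right_inv := by rintro (i | i | i) <;> simp

@[simp] lemma ringSplit_symm_inl (n : ℕ) (i : Fin n) :
    (ringSplit n).symm (Sum.inl i) = (i, 0) := rfl
@[simp] lemma ringSplit_symm_inr_inl (n : ℕ) (i : Fin n) :
    (ringSplit n).symm (Sum.inr (Sum.inl i)) = (i, 1) := rfl
@[simp] lemma ringSplit_symm_inr_inr (n : ℕ) (i : Fin n) :
    (ringSplit n).symm (Sum.inr (Sum.inr i)) = (i, 2) := rfl

/-- Determinant of the `n × n` "circulant-like" characteristic block. -/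
lemma det_circ (n : ℕ) (hn : 1 ≤ n) (a c : ℝ) :
    (Matrix.of fun i j : Fin n => if i = j then (X : ℝ[X]) - C a else -C c).det
      = (X - C (a + ((n : ℝ) - 1) * c)) * (X - C (a - c)) ^ (n - 1) := by
  obtain ⟨m, rfl⟩ : ∃ m, n = m + 1 := ⟨n - 1, (Nat.succ_pred_eq_of_pos hn).symm⟩
  set K := FractionRing (Polynomial ℝ)
  set f : ℝ[X] →+* K := algebraMap ℝ[X] K with hf
  have hinj : Function.Injective f := IsFractionRing.injective _ _
  apply hinj
  rw [RingHom.map_det, RingHom.mapMatrix_apply]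
  set u : K := f (X - C (a - c)) with hu_def
  have hu : u ≠ 0 := by
    rw [hu_def, Ne, map_eq_zero_iff f hinj]
    exact Polynomial.X_sub_C_ne_zero _
  have key : (X : ℝ[X]) - C (a - c) - C c = X - C a := by rw [C_sub]; ring
  have hfa : f (X - C a) = u - f (C c) := by rw [hu_def, ← map_sub, key]
  have hM : (Matrix.of fun i j : Fin (m + 1) => if i = j then (X : ℝ[X]) - C a else -C c).map f
      = u • (1 + Matrix.replicateCol (Fin 1) (fun _ => -f (C c) * u⁻¹) *
          Matrix.replicateRow (Fin 1) (fun _ => (1 : K))) := by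
    ext i j
    simp only [Matrix.map_apply, Matrix.of_apply, Matrix.smul_apply, Matrix.add_apply,
      Matrix.mul_apply, Matrix.replicateCol_apply, Matrix.replicateRow_apply, Finset.univ_unique,
      Finset.sum_singleton, mul_one, Matrix.one_apply, smul_eq_mul]
    by_cases h : i = j
    · simp only [if_pos h]
      rw [hfa]
      rw [mul_add, mul_one, mul_left_comm, mul_inv_cancel₀ hu]
      ring
    · simp only [if_neg h, map_neg, zero_add]
      rw [mul_left_comm, mul_inv_cancel₀ hu]
      ring
  have h1 : (X : ℝ[X]) - C (a + (((m + 1 : ℕ) : ℝ) - 1) * c)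
      = X - C (a - c) - C ((((m + 1 : ℕ) : ℝ)) * c) := by
    rw [sub_sub, ← C_add]
    congr 2
    push_cast
    ring
  rw [hM, Matrix.det_smul]
  erw [det_one_add_replicateCol_mul_replicateRow]
  rw [Fintype.card_fin, _root_.map_mul, map_pow, h1,
    map_sub, ← hu_def, C_mul, _root_.map_mul]
  have hcast : f (C (((m + 1 : ℕ) : ℝ))) = ((m + 1 : ℕ) : K) := by
    rw [Polynomial.C_eq_natCast, map_natCast]
  rw [hcast]
  simp only [dotProduct, one_mul, Finset.sum_const, Finset.card_univ, Fintype.card_fin,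
    nsmul_eq_mul, Nat.add_sub_cancel]
  linear_combination (((m + 1 : ℕ) : K) * (-f (C c)) * u ^ m) * mul_inv_cancel₀ hu

/-- The characteristic polynomial of the ring matrix `A` is
`Xⁿ · (X + 1)ⁿ · (X − μ₁) · (X − μ₂)^(n−1)` with `μ₁ = −1 − d/p + (n−1)·d/(2p)` and
`μ₂ = −1 − d/p − d/(2p)`. -/
theorem ringA_charpoly (d : ℝ) (p : ℕ) (hp : 1 ≤ p) (n : ℕ) (hn : 1 ≤ n) :
    (ringA d p n).charpoly =
      Polynomial.X ^ n * (Polynomial.X + 1) ^ n *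
        (Polynomial.X - Polynomial.C (-1 - d / (p : ℝ) + ((n : ℝ) - 1) * d / (2 * (p : ℝ)))) *
        (Polynomial.X - Polynomial.C (-1 - d / (p : ℝ) - d / (2 * (p : ℝ)))) ^ (n - 1) := by
  classical
  rw [Matrix.charpoly, ← Matrix.det_reindex_self (ringSplit n) (charmatrix (ringA d p n))]
  have hre : (reindex (ringSplit n) (ringSplit n) (charmatrix (ringA d p n))) =
      Matrix.fromBlocks
        (Matrix.of fun i j : Fin n =>
          if i = j then (X : ℝ[X]) - C (-1 - d / (p : ℝ)) else -C (d / (2 * (p : ℝ))))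
        0
        (Matrix.of fun s j =>
          Sum.elim (fun _ => (0 : ℝ[X])) (fun i => if i = j then -1 else 0) s)
        (Matrix.fromBlocks (((X : ℝ[X]) + 1) • (1 : Matrix (Fin n) (Fin n) ℝ[X])) 0
          (1 : Matrix (Fin n) (Fin n) ℝ[X]) ((X : ℝ[X]) • 1)) := by
    ext s t : 2
    rcases s with i | i | i <;> rcases t with j | j | j <;> by_cases h : i = j <;>
      simp [h, reindex_apply, submatrix_apply, charmatrix_apply, ringA, ringA0, ringA1,
        Matrix.one_apply, Prod.ext_iff, Matrix.diagonal_apply, sub_neg_eq_add, Matrix.vecHead, Matrix.vecTail]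
  rw [hre, Matrix.det_fromBlocks_zero₁₂, Matrix.det_fromBlocks_zero₁₂,
    det_circ n hn (-1 - d / (p : ℝ)) (d / (2 * (p : ℝ))), Matrix.det_smul, Matrix.det_smul,
    Matrix.det_one, Fintype.card_fin]
  have h1 : -1 - d / (p : ℝ) + ((n : ℝ) - 1) * (d / (2 * (p : ℝ)))
      = -1 - d / (p : ℝ) + ((n : ℝ) - 1) * d / (2 * (p : ℝ)) := by ring
  rw [h1]
  ring
end

section
/- Let d > 0 be real, p a positive integer, and n ≥ 2 an integer with n < (2(p + d) + d)/d (for p = 1 this is the bound n < (2p(d+1)+d)/d of the paper). Then every nonzero complex eigenvalue of the 3n×3n block matrix A is a negative real number; consequently, for every α ∈ (0, 1] every nonzero complex eigenvalue z of A satisfies |arg(z)| = π > απ/2. -/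
open Matrix Polynomial Finset
theorem ringA_det (d : ℝ) (p n : ℕ) (z : ℂ) :
    (z • (1 : Matrix (Fin n × Fin 3) (Fin n × Fin 3) ℂ)
        - ((ringA d p n).map (algebraMap ℝ ℂ))).det
      = (Matrix.of fun i j : Fin n =>
            if i = j then z + 1 + (d:ℂ)/(p:ℂ) else -((d:ℂ)/(2*(p:ℂ)))).det
        * (z + 1) ^ n * z ^ n := by
  set N : Matrix (Fin n × Fin 3) (Fin n × Fin 3) ℂ :=
    z • (1 : Matrix (Fin n × Fin 3) (Fin n × Fin 3) ℂ)
        - ((ringA d p n).map (algebraMap ℝ ℂ)) with hNdef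
  have hentry : ∀ q r : Fin n × Fin 3, N q r =
      (if q = r then z else 0) - algebraMap ℝ ℂ
        (if q.1 = r.1 then ringA0 d p q.2 r.2 else ringA1 d p q.2 r.2) := by
    intro q r
    simp [hNdef, Matrix.sub_apply, Matrix.smul_apply, Matrix.one_apply, Matrix.map_apply,
      ringA, mul_ite]
  have hbt : BlockTriangular Nᵀ (fun q => q.2) := by
    intro q r hlt
    simp only [Matrix.transpose_apply]
    rw [hentry]
    have hne : r ≠ q := by
      intro h; rw [h] at hlt; exact lt_irrefl _ hlt
    rw [if_neg hne]
    have h0 : ∀ a b : Fin 3, a < b → ringA0 d p a b = 0 ∧ ringA1 d p a b = 0 := by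
      intro a b hab
      fin_cases a <;> fin_cases b <;>
        first
          | exact absurd hab (by decide)
          | exact ⟨by simp [ringA0], by simp [ringA1]⟩
    rcases h0 r.2 q.2 hlt with ⟨e0, e1⟩
    split_ifs <;> simp [e0, e1]
  have key : ∀ k : Fin 3, ((Nᵀ).toSquareBlock (fun q => q.2) k).det
      = (Matrix.of fun i j : Fin n => N (j, k) (i, k)).det := by
    intro k
    let e : Fin n ≃ {a : Fin n × Fin 3 // a.2 = k} :=
      { toFun := fun i => ⟨(i, k), rfl⟩
        invFun := fun q => q.1.1
        left_inv := fun i => rfl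
        right_inv := fun q => Subtype.ext (Prod.ext rfl q.2.symm) }
    rw [← Matrix.det_submatrix_equiv_self e]
    congr 1
  rw [← Matrix.det_transpose N, hbt.det_fintype, Fin.prod_univ_three, key 0, key 1, key 2]
  have hb2 : (Matrix.of fun i j : Fin n => N (j, (2:Fin 3)) (i, (2:Fin 3)))
      = Matrix.diagonal (fun _ => z) := by
    ext i j
    rw [Matrix.of_apply, hentry]
    by_cases h : j = i
    · subst h
      simp [ringA0, Matrix.diagonal_apply_eq, Matrix.vecHead, Matrix.vecTail]
    · have h' : i ≠ j := fun hh => h hh.symm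
      have h'' : ((j, (2:Fin 3)) : Fin n × Fin 3) ≠ (i, 2) := by
        simp [Prod.ext_iff, h]
      rw [if_neg h'', Matrix.diagonal_apply_ne _ h']
      split_ifs with hfst
      · exact absurd hfst h
      · simp [ringA1, Matrix.vecHead, Matrix.vecTail]
  have hb1 : (Matrix.of fun i j : Fin n => N (j, (1:Fin 3)) (i, (1:Fin 3)))
      = Matrix.diagonal (fun _ => z + 1) := by
    ext i j
    rw [Matrix.of_apply, hentry]
    by_cases h : j = i
    · subst h
      simp [ringA0, Matrix.diagonal_apply_eq, Matrix.vecHead, Matrix.vecTail]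
    · have h' : i ≠ j := fun hh => h hh.symm
      have h'' : ((j, (1:Fin 3)) : Fin n × Fin 3) ≠ (i, 1) := by
        simp [Prod.ext_iff, h]
      rw [if_neg h'', Matrix.diagonal_apply_ne _ h']
      split_ifs with hfst
      · exact absurd hfst h
      · simp [ringA1, Matrix.vecHead, Matrix.vecTail]
  have hb0 : (Matrix.of fun i j : Fin n => N (j, (0:Fin 3)) (i, (0:Fin 3)))
      = (Matrix.of fun i j : Fin n =>
            if i = j then z + 1 + (d:ℂ)/(p:ℂ) else -((d:ℂ)/(2*(p:ℂ)))) := by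
    ext i j
    rw [Matrix.of_apply, Matrix.of_apply, hentry]
    by_cases h : j = i
    · subst h
      simp only [if_pos rfl]
      simp [ringA0, Matrix.vecHead, Matrix.vecTail]
      ring
    · have h' : ¬ i = j := fun hh => h hh.symm
      have h'' : ((j, (0:Fin 3)) : Fin n × Fin 3) ≠ (i, 0) := by
        simp [Prod.ext_iff, h]
      rw [if_neg h'', if_neg h']
      split_ifs with hfst
      · exact absurd hfst h
      · simp [ringA1, Matrix.vecHead, Matrix.vecTail]
  rw [hb0, hb1, hb2, Matrix.det_diagonal, Matrix.det_diagonal]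
  simp

theorem det_aux (n : ℕ) (a c : ℂ) (ha : a ≠ 0) :
    (Matrix.of fun i j : Fin n => if i = j then a - c else -c).det
      = a ^ n * (1 - (n : ℂ) * (c / a)) := by
  have h : (Matrix.of fun i j : Fin n => if i = j then a - c else -c)
      = a • (1 + replicateCol Unit (fun _ => -c/a) * replicateRow Unit (fun _ => (1:ℂ))) := by
    ext i j
    simp only [Matrix.smul_apply, Matrix.add_apply, Matrix.mul_apply, Matrix.replicateCol_apply,
      Matrix.replicateRow_apply, Finset.sum_const, Finset.card_univ, Fintype.card_unit, one_smul,
      Matrix.of_apply]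
    by_cases hij : i = j
    · subst hij
      simp only [Matrix.one_apply_eq, if_pos rfl]
      field_simp
      rw [if_pos trivial]; linear_combination (c - a) * mul_inv_cancel₀ ha
    · simp only [Matrix.one_apply_ne hij, if_neg hij]
      field_simp
      linear_combination c * mul_inv_cancel₀ ha
  rw [h, Matrix.det_smul, Matrix.det_one_add_replicateCol_mul_replicateRow]
  simp only [dotProduct, one_mul, Finset.sum_const, Finset.card_univ, Fintype.card_fin,
    nsmul_eq_mul]
  ring

theorem eval_charpoly_det {m : Type*} [Fintype m] [DecidableEq m] (M : Matrix m m ℂ) (z : ℂ) :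
    M.charpoly.eval z = (z • (1 : Matrix m m ℂ) - M).det := by
  rw [Matrix.charpoly, ← Polynomial.coe_evalRingHom, RingHom.map_det]
  congr 1
  ext i j
  by_cases h : i = j
  · subst h; simp [Matrix.charmatrix_apply_eq]
  · simp [Matrix.charmatrix_apply_ne _ _ _ h, Matrix.one_apply_ne h]

/-- If `d > 0` and `2 ≤ n < (2(p + d) + d)/d`, then every nonzero complex eigenvalue of
the ring matrix `A` is a negative real number; consequently, for every `α ∈ (0, 1]` it
satisfies `|arg z| = π > απ/2`. -/
theorem ringA_stable_eigenvalues (d : ℝ) (hd : 0 < d) (p : ℕ) (hp : 1 ≤ p)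
    (n : ℕ) (hn : 2 ≤ n) (hbound : (n : ℝ) < (2 * ((p : ℝ) + d) + d) / d) :
    ∀ z : ℂ, z ≠ 0 → Polynomial.aeval z (ringA d p n).charpoly = 0 →
      (z.im = 0 ∧ z.re < 0) ∧ |z.arg| = Real.pi ∧
        ∀ α ∈ Set.Ioc (0 : ℝ) 1, |z.arg| > α * Real.pi / 2 := by
  have hp' : (0:ℝ) < (p:ℝ) := by exact_mod_cast hp
  have hpC : ((p:ℝ):ℂ) ≠ 0 := by exact_mod_cast hp'.ne'
  intro z hz hchar
  -- helper for conclusion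
  have final : ∀ r : ℝ, r < 0 → z = (r:ℂ) →
      (z.im = 0 ∧ z.re < 0) ∧ |z.arg| = Real.pi ∧
        ∀ α ∈ Set.Ioc (0 : ℝ) 1, |z.arg| > α * Real.pi / 2 := by
    rintro r hr rfl
    have harg : Complex.arg (r:ℂ) = Real.pi := Complex.arg_ofReal_of_neg hr
    refine ⟨⟨by simp, by simpa using hr⟩, by rw [harg]; exact abs_of_pos Real.pi_pos, ?_⟩
    rintro α ⟨hα0, hα1⟩
    rw [harg, abs_of_pos Real.pi_pos]
    nlinarith [Real.pi_pos]
  -- determinant equation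
  have h1 : (((ringA d p n).map (algebraMap ℝ ℂ)).charpoly).eval z = 0 := by
    rw [Matrix.charpoly_map, ← Polynomial.eval₂_eq_eval_map, ← Polynomial.aeval_def]
    exact hchar
  rw [eval_charpoly_det, ringA_det] at h1
  have hzn : z ^ n ≠ 0 := pow_ne_zero _ hz
  by_cases hz1 : z = -1
  · exact final (-1) (by norm_num) (by rw [hz1]; norm_num)
  have hz1' : (z + 1) ^ n ≠ 0 := pow_ne_zero _ (by intro h; exact hz1 (by linear_combination h))
  have hB0 : (Matrix.of fun i j : Fin n =>
      if i = j then z + 1 + (d:ℂ)/(p:ℂ) else -((d:ℂ)/(2*(p:ℂ)))).det = 0 := by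
    rcases mul_eq_zero.mp h1 with h | h
    · rcases mul_eq_zero.mp h with h | h
      · exact h
      · exact absurd h hz1'
    · exact absurd h hzn
  set μ2 : ℝ := -1 - d/(p:ℝ) - d/(2*(p:ℝ)) with hμ2
  set μ1 : ℝ := -1 - d/(p:ℝ) + ((n:ℝ)-1)*(d/(2*(p:ℝ))) with hμ1
  by_cases hz2 : z = (μ2 : ℂ)
  · refine final μ2 ?_ hz2
    have h2p : (0:ℝ) < 2*(p:ℝ) := by linarith
    have := div_pos hd hp'
    have := div_pos hd h2p
    rw [hμ2]; linarith
  · -- block 0 determinant analysis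
    set c : ℂ := (d:ℂ)/(2*((p:ℝ):ℂ)) with hc
    set a : ℂ := z + 1 + (d:ℂ)/((p:ℝ):ℂ) + c with ha
    have haz : a ≠ 0 := by
      intro h0
      apply hz2
      have : (μ2 : ℂ) = -1 - (d:ℂ)/((p:ℝ):ℂ) - (d:ℂ)/(2*((p:ℝ):ℂ)) := by
        rw [hμ2]; push_cast; ring
      rw [this]
      have := h0
      rw [ha, hc] at this
      linear_combination this
    have hform : (Matrix.of fun i j : Fin n =>
        if i = j then z + 1 + (d:ℂ)/(p:ℂ) else -((d:ℂ)/(2*(p:ℂ))))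
        = (Matrix.of fun i j : Fin n => if i = j then a - c else -c) := by
      ext i j
      simp only [Matrix.of_apply]
      split_ifs
      · rw [ha, hc]; push_cast; ring
      · rw [hc]; push_cast; ring
    rw [hform, det_aux n a c haz] at hB0
    have hfac : (1 : ℂ) - (n:ℂ) * (c / a) = 0 := by
      rcases mul_eq_zero.mp hB0 with h | h
      · exact absurd h (pow_ne_zero _ haz)
      · exact h
    have hanc : a = (n:ℂ) * c := by
      field_simp at hfac
      linear_combination hfac
    have hzμ1 : z = (μ1 : ℂ) := by
      have : (μ1 : ℂ) = -1 - (d:ℂ)/((p:ℝ):ℂ) + ((n:ℂ)-1)*((d:ℂ)/(2*((p:ℝ):ℂ))) := by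
        rw [hμ1]; push_cast; ring
      rw [this, ← hc]
      rw [ha, hc] at hanc
      linear_combination hanc
    refine final μ1 ?_ hzμ1
    have h2 : (n:ℝ)*d < 2*((p:ℝ)+d)+d := (lt_div_iff₀ hd).mp hbound
    have hμ1eq : μ1 = ((n:ℝ)*d - (2*((p:ℝ)+d)+d))/(2*(p:ℝ)) := by
      rw [hμ1]; field_simp; ring
    rw [hμ1eq]
    apply div_neg_of_neg_of_pos
    · linarith
    · linarith
end
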